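/- Let J = S \ {s_i : i ∈ I} and let w ∈ W^J with reduced expression w = s_{i_t} s_{i_{t-1}} ⋯ s_{i_1}. Then (i_1, i_2, …, i_t) is a valid firing sequence in the Modified Kostant Game with active set I: at each step λ (1 ≤ λ ≤ t), the vertex i_λ is sad in the configuration reached after firing i_1, …, i_{λ-1}. -/

import Mathlib

open scoped Classical RealInnerProductSpace

noncomputable section

variable {n d : ℕ}

/-- The pairing `⟨β, γ^∨⟩ = 2(β,γ)/(γ,γ)` of a vector with a coroot. -/
def rsPair (β γ : EuclideanSpace ℝ (Fin d)) : ℝ := 2 * ⟪β, γ⟫ / ⟪γ, γ⟫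

/-- The coroot `γ^∨ = 2γ/(γ,γ)`. -/
def rsCoroot (γ : EuclideanSpace ℝ (Fin d)) : EuclideanSpace ℝ (Fin d) :=
  (2 / ⟪γ, γ⟫) • γ

/-- `⟨·, γ^∨⟩` as a linear functional. -/
def corootForm (γ : EuclideanSpace ℝ (Fin d)) : EuclideanSpace ℝ (Fin d) →ₗ[ℝ] ℝ where
  toFun x := 2 * ⟪x, γ⟫ / ⟪γ, γ⟫
  map_add' x y := by simp only [inner_add_left]; ring
  map_smul' c x := by simp only [real_inner_smul_left, RingHom.id_apply, smul_eq_mul]; ring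

/-- A finite reduced crystallographic root system in the Euclidean space `ℝ^d`, together with a
chosen base of simple roots `α 0, …, α (n-1)`: every root is an integral linear combination of
the simple roots with all coefficients nonnegative or all nonpositive. -/
structure RootSystemBase (n d : ℕ) : Type where
  Φ : Finset (EuclideanSpace ℝ (Fin d))
  α : Fin n → EuclideanSpace ℝ (Fin d)
  α_mem : ∀ i, α i ∈ Φ
  nonzero : ∀ β ∈ Φ, β ≠ 0
  reduced : ∀ β ∈ Φ, ∀ t : ℝ, t • β ∈ Φ → t = 1 ∨ t = -1
  crystallographic : ∀ β ∈ Φ, ∀ γ ∈ Φ, ∃ k : ℤ, rsPair β γ = (k : ℝ)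
  reflClosed : ∀ β ∈ Φ, ∀ γ ∈ Φ, β - rsPair β γ • γ ∈ Φ
  indep : LinearIndependent ℝ α
  base : ∀ β ∈ Φ, ∃ c : Fin n → ℤ,
    β = ∑ i, (c i : ℝ) • α i ∧ ((∀ i, 0 ≤ c i) ∨ (∀ i, c i ≤ 0))

/-- The extended space `E' = E ⊕ ℝ^I`. -/
abbrev ExtSp (n d : ℕ) (I : Finset (Fin n)) : Type :=
  EuclideanSpace ℝ (Fin d) × ({p : Fin n // p ∈ I} → ℝ)

/-- The total source vector `β = ∑_{p ∈ I} β_p` in the extended space. -/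
def betaVec (n d : ℕ) (I : Finset (Fin n)) : ExtSp n d I := (0, fun _ => 1)

namespace RootSystemBase

variable (R : RootSystemBase n d)

lemma alpha_ne_zero (i : Fin n) : R.α i ≠ 0 := R.nonzero _ (R.α_mem i)

lemma inner_alpha_ne_zero (i : Fin n) : ⟪R.α i, R.α i⟫ ≠ 0 := fun h =>
  R.alpha_ne_zero i ((inner_self_eq_zero (𝕜 := ℝ)).mp h)

lemma corootForm_alpha_self (i : Fin n) : corootForm (R.α i) (R.α i) = 2 := by
  have h2 := R.inner_alpha_ne_zero i
  show 2 * ⟪R.α i, R.α i⟫ / ⟪R.α i, R.α i⟫ = 2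
  rw [mul_div_assoc, div_self h2, mul_one]

/-- The simple reflection `s_i : x ↦ x - ⟨x, α_i^∨⟩ α_i` as a linear automorphism of `E`. -/
def sRefl (i : Fin n) :
    EuclideanSpace ℝ (Fin d) ≃ₗ[ℝ] EuclideanSpace ℝ (Fin d) :=
  Module.reflection (R.corootForm_alpha_self i)

/-- The Weyl group `W`, as the subgroup of linear automorphisms of `E` generated by the
simple reflections. -/
def weyl : Subgroup (EuclideanSpace ℝ (Fin d) ≃ₗ[ℝ] EuclideanSpace ℝ (Fin d)) :=
  Subgroup.closure (Set.range R.sRefl)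

/-- `wordProd [i₁, …, i_t] = s_{i₁} ⋯ s_{i_t}`. -/
def wordProd (l : List (Fin n)) :
    EuclideanSpace ℝ (Fin d) ≃ₗ[ℝ] EuclideanSpace ℝ (Fin d) :=
  (l.map R.sRefl).prod

/-- The Weyl group element `s_{i_t} ⋯ s_{i_1}` associated to the firing sequence
`(i_1, …, i_t)`. -/
def seqProd (l : List (Fin n)) :
    EuclideanSpace ℝ (Fin d) ≃ₗ[ℝ] EuclideanSpace ℝ (Fin d) :=
  (l.reverse.map R.sRefl).prod

/-- The length function `ℓ` of the Coxeter system `(W, S)`: the minimal number of simple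
reflections needed to express `w`. -/
def len (w : EuclideanSpace ℝ (Fin d) ≃ₗ[ℝ] EuclideanSpace ℝ (Fin d)) : ℕ :=
  sInf {t | ∃ l : List (Fin n), l.length = t ∧ R.wordProd l = w}

/-- The set `W^J` of minimal length representatives of `W/W_J`, for `J = S \ {s_i : i ∈ I}`:
those `w ∈ W` with `ℓ(w s_j) > ℓ(w)` for all `j ∉ I`. -/
def minReps (I : Finset (Fin n)) :
    Set (EuclideanSpace ℝ (Fin d) ≃ₗ[ℝ] EuclideanSpace ℝ (Fin d)) :=
  {w | w ∈ R.weyl ∧ ∀ j, j ∉ I → R.len w < R.len (w * R.sRefl j)}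

/-- The Cartan matrix `a_{uv} = ⟨α_u, α_v^∨⟩` (an integer by crystallinity). -/
def cartan (u v : Fin n) : ℤ := ⌊rsPair (R.α u) (R.α v)⌋

/-- The set `Φ⁺` of positive roots. -/
def posRoots : Finset (EuclideanSpace ℝ (Fin d)) :=
  R.Φ.filter fun β => ∃ c : Fin n → ℤ, β = ∑ i, (c i : ℝ) • R.α i ∧ ∀ i, 0 ≤ c i

/-- The set `Φ_P⁺` of positive roots lying in the span of the simple roots `α_j`, `j ∈ P`. -/
def parPos (P : Finset (Fin n)) : Finset (EuclideanSpace ℝ (Fin d)) :=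
  R.posRoots.filter fun β => β ∈ Submodule.span ℝ (R.α '' (P : Set (Fin n)))

/-- `∑_{u ≠ v} (−a_{uv}) c_u + [v ∈ I]`. -/
def chipBound (I : Finset (Fin n)) (c : Fin n → ℤ) (v : Fin n) : ℤ :=
  (∑ u ∈ Finset.univ.erase v, -(R.cartan u v) * c u) + (if v ∈ I then 1 else 0)

/-- Vertex `v` is sad in the configuration `c` (Modified Kostant Game with active set `I`). -/
def Sad (I : Finset (Fin n)) (c : Fin n → ℤ) (v : Fin n) : Prop :=
  2 * c v < R.chipBound I c v

/-- Firing vertex `v`. -/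
def fire (I : Finset (Fin n)) (c : Fin n → ℤ) (v : Fin n) : Fin n → ℤ :=
  Function.update c v (R.chipBound I c v - c v)

end RootSystemBase

/-- `ValidFrom R I c l`: starting from the configuration `c`, the sequence `l` fires a sad
vertex at each step. -/
def RootSystemBase.ValidFrom (R : RootSystemBase n d) (I : Finset (Fin n)) :
    (Fin n → ℤ) → List (Fin n) → Prop
  | _, [] => True
  | c, v :: l => R.Sad I c v ∧ RootSystemBase.ValidFrom R I (R.fire I c v) l

namespace RootSystemBase

variable (R : RootSystemBase n d)

/-- A valid firing sequence: starts at the zero configuration and fires a sad vertex at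
each step. -/
def Valid (I : Finset (Fin n)) (l : List (Fin n)) : Prop := R.ValidFrom I 0 l

/-- The configuration reached after playing the sequence `l` from the zero configuration. -/
def play (I : Finset (Fin n)) (l : List (Fin n)) : Fin n → ℤ :=
  l.foldl (R.fire I) 0

/-- A maximal valid firing sequence: no vertex is sad in the final configuration. -/
def MaximalSeq (I : Finset (Fin n)) (l : List (Fin n)) : Prop :=
  R.Valid I l ∧ ∀ v, ¬ R.Sad I (R.play I l) v

/-- The (integer) coefficients of a vector in the basis of simple coroots, when they exist. -/
def corootCoeffs (x : EuclideanSpace ℝ (Fin d)) : Fin n → ℤ :=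
  if h : ∃ k : Fin n → ℤ, x = ∑ j, (k j : ℝ) • rsCoroot (R.α j) then h.choose else 0

/-- The `I`-height of a (co)vector: the sum over `j ∈ I` of its coefficients in the basis
of simple coroots. -/
def htI (I : Finset (Fin n)) (x : EuclideanSpace ℝ (Fin d)) : ℤ :=
  ∑ j ∈ I, R.corootCoeffs x j

end RootSystemBase

/-- The extended pairing `⟨·, α_i^∨⟩` on `E' = E ⊕ ℝ^I`, determined by
`⟨β_p, α_i^∨⟩ = −δ_{pi}`, as a linear functional. -/
def extForm (R : RootSystemBase n d) (I : Finset (Fin n)) (i : Fin n) :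
    ExtSp n d I →ₗ[ℝ] ℝ :=
  (corootForm (R.α i)).comp (LinearMap.fst ℝ _ _) -
    (if h : i ∈ I then
      (LinearMap.proj (R := ℝ) (φ := fun _ : {p : Fin n // p ∈ I} => ℝ) ⟨i, h⟩).comp
        (LinearMap.snd ℝ _ _)
    else 0)

namespace RootSystemBase

variable (R : RootSystemBase n d)

lemma extForm_apply (I : Finset (Fin n)) (i : Fin n) (x : ExtSp n d I) :
    extForm R I i x = corootForm (R.α i) x.1 - (if h : i ∈ I then x.2 ⟨i, h⟩ else 0) := by
  by_cases h : i ∈ I <;> simp [extForm, h]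

lemma extForm_alpha (I : Finset (Fin n)) (i : Fin n) :
    extForm R I i ((R.α i, 0) : ExtSp n d I) = 2 := by
  rw [R.extForm_apply]
  simp [R.corootForm_alpha_self i]

/-- The simple reflection `s_i : x ↦ x − ⟨x, α_i^∨⟩ α_i` on the extended space `E'`. -/
def extRefl (I : Finset (Fin n)) (i : Fin n) : ExtSp n d I ≃ₗ[ℝ] ExtSp n d I :=
  Module.reflection (R.extForm_alpha I i)

/-- The extended pairing `⟨x, α_i^∨⟩` for `x ∈ E'`. -/
def extPair (I : Finset (Fin n)) (x : ExtSp n d I) (i : Fin n) : ℝ := extForm R I i x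

/-- The action of `s_{i_t} ⋯ s_{i_1}` on the extended space `E'`. -/
def extSeqProd (I : Finset (Fin n)) (l : List (Fin n)) : ExtSp n d I ≃ₗ[ℝ] ExtSp n d I :=
  (l.reverse.map (R.extRefl I)).prod

end RootSystemBase

/-! A configuration `c` is tracked by the vector `u = ∑ c_u α_u`, on which firing `v` acts by
`u ↦ s_v u + [v ∈ I] α_v`. With the weighted `I`-height `K = ∑_{p ∈ I} (|α_p|²/2) κ_p`
(`κ_p` the `α_p`-coordinate), the quantity `⟪u, w δ⟫ - K(w δ)` equals `-K(δ)` after playing any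
sequence `l`, where `w = s_{i_λ} ⋯ s_{i_1}` is the corresponding Weyl group element. Taking
`δ = w⁻¹ α_v` shows that `v` is sad after `l` exactly when `K(w⁻¹ α_v) > 0`. If `x = w' s_v w`
lies in `W^J` and the product is reduced, the root `γ = w⁻¹ α_v` is positive and its support
meets `I`: otherwise `x γ` would be a nonnegative combination of the positive roots `x α_j`,
`j ∉ I`, whereas `x γ = -w' α_v` is a negative root. -/

lemma corootForm_apply (γ x : EuclideanSpace ℝ (Fin d)) :
    corootForm γ x = 2 * ⟪x, γ⟫ / ⟪γ, γ⟫ := rfl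

namespace RootSystemBase

variable (R : RootSystemBase n d)

lemma inner_alpha_pos (i : Fin n) : 0 < ⟪R.α i, R.α i⟫ :=
  real_inner_self_pos.mpr (R.alpha_ne_zero i)

lemma sRefl_apply (i : Fin n) (x : EuclideanSpace ℝ (Fin d)) :
    R.sRefl i x = x - corootForm (R.α i) x • R.α i :=
  Module.reflection_apply x (R.corootForm_alpha_self i)

lemma cartan_eq_corootForm (u v : Fin n) :
    (R.cartan u v : ℝ) = corootForm (R.α v) (R.α u) := by
  obtain ⟨k, hk⟩ := R.crystallographic _ (R.α_mem u) _ (R.α_mem v)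
  rw [cartan, hk, Int.floor_intCast, ← hk]
  rfl

lemma cartan_self (v : Fin n) : R.cartan v v = 2 := by
  exact_mod_cast (R.cartan_eq_corootForm v v).trans (R.corootForm_alpha_self v)

lemma inner_sRefl_sRefl (i : Fin n) (x y : EuclideanSpace ℝ (Fin d)) :
    ⟪R.sRefl i x, R.sRefl i y⟫ = ⟪x, y⟫ := by
  have h := R.inner_alpha_ne_zero i
  simp only [sRefl_apply, inner_sub_left, inner_sub_right, real_inner_smul_left,
    real_inner_smul_right, corootForm_apply, real_inner_comm (R.α i) y]
  field_simp
  ring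

lemma sRefl_sRefl (i : Fin n) (x : EuclideanSpace ℝ (Fin d)) :
    R.sRefl i (R.sRefl i x) = x :=
  Module.involutive_reflection (R.corootForm_alpha_self i) x

lemma sRefl_mul_self (i : Fin n) : R.sRefl i * R.sRefl i = 1 :=
  LinearEquiv.ext (R.sRefl_sRefl i)

lemma sRefl_inv (i : Fin n) : (R.sRefl i)⁻¹ = R.sRefl i :=
  inv_eq_of_mul_eq_one_right (R.sRefl_mul_self i)

lemma sRefl_alpha_self (i : Fin n) : R.sRefl i (R.α i) = -R.α i :=
  Module.reflection_apply_self _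

lemma inner_alpha_sRefl (v : Fin n) (x : EuclideanSpace ℝ (Fin d)) :
    ⟪R.α v, R.sRefl v x⟫ = -⟪x, R.α v⟫ := by
  rw [← R.inner_sRefl_sRefl v, R.sRefl_sRefl, R.sRefl_alpha_self, inner_neg_left,
    real_inner_comm]

lemma sRefl_mem (i : Fin n) {β : EuclideanSpace ℝ (Fin d)} (h : β ∈ R.Φ) :
    R.sRefl i β ∈ R.Φ := by
  rw [sRefl_apply]
  exact R.reflClosed β h _ (R.α_mem i)

lemma wordProd_cons (j : Fin n) (m : List (Fin n)) :
    R.wordProd (j :: m) = R.sRefl j * R.wordProd m := by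
  simp [wordProd]

lemma wordProd_append (a b : List (Fin n)) :
    R.wordProd (a ++ b) = R.wordProd a * R.wordProd b := by
  simp [wordProd]

lemma seqProd_eq_wordProd_reverse (l : List (Fin n)) : R.seqProd l = R.wordProd l.reverse := rfl

lemma seqProd_append (a b : List (Fin n)) :
    R.seqProd (a ++ b) = R.seqProd b * R.seqProd a := by
  simp [seqProd_eq_wordProd_reverse, wordProd_append]

lemma seqProd_concat (l : List (Fin n)) (v : Fin n) :
    R.seqProd (l ++ [v]) = R.sRefl v * R.seqProd l := by
  simp [seqProd]

lemma seqProd_eq_inv (l : List (Fin n)) : R.seqProd l = (R.wordProd l)⁻¹ := by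
  simp [seqProd, wordProd, List.prod_inv_reverse, Function.comp_def, sRefl_inv, List.map_reverse]

lemma seqProd_wordProd_apply (l : List (Fin n)) (x : EuclideanSpace ℝ (Fin d)) :
    R.seqProd l (R.wordProd l x) = x := by
  rw [seqProd_eq_inv]
  exact (R.wordProd l).symm_apply_apply x

lemma wordProd_mem (m : List (Fin n)) {β : EuclideanSpace ℝ (Fin d)} (h : β ∈ R.Φ) :
    R.wordProd m β ∈ R.Φ := by
  induction m with
  | nil => exact h
  | cons j m ih => rw [wordProd_cons]; exact R.sRefl_mem j ih

lemma seqProd_mem (l : List (Fin n)) {β : EuclideanSpace ℝ (Fin d)} (h : β ∈ R.Φ) :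
    R.seqProd l β ∈ R.Φ :=
  R.wordProd_mem l.reverse h

lemma inner_wordProd_wordProd (m : List (Fin n)) (x y : EuclideanSpace ℝ (Fin d)) :
    ⟪R.wordProd m x, R.wordProd m y⟫ = ⟪x, y⟫ := by
  induction m with
  | nil => rfl
  | cons j m ih => rw [wordProd_cons]; exact (R.inner_sRefl_sRefl j _ _).trans ih


def simpleCoord (p : Fin n) : EuclideanSpace ℝ (Fin d) →ₗ[ℝ] ℝ :=
  ((Module.Basis.span R.indep).coord p).comp
    (Submodule.orthogonalProjectionOnto (Submodule.span ℝ (Set.range R.α))).toLinearMap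

lemma simpleCoord_alpha (p i : Fin n) : R.simpleCoord p (R.α i) = if p = i then 1 else 0 := by
  have hmem : R.α i ∈ Submodule.span ℝ (Set.range R.α) := Submodule.subset_span ⟨i, rfl⟩
  have hproj : Submodule.orthogonalProjectionOnto _ (R.α i) = Module.Basis.span R.indep i := by
    rw [Module.Basis.span_apply]
    exact Submodule.orthogonalProjectionOnto_mem_subspace_eq_self ⟨R.α i, hmem⟩
  simp only [simpleCoord, LinearMap.comp_apply, ContinuousLinearMap.coe_coe, hproj,
    Module.Basis.coord_apply, Module.Basis.repr_self, Finsupp.single_apply, eq_comm]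

lemma simpleCoord_sum (p : Fin n) (c : Fin n → ℝ) :
    R.simpleCoord p (∑ i, c i • R.α i) = c p := by
  simp [simpleCoord_alpha]

def IsPos (β : EuclideanSpace ℝ (Fin d)) : Prop :=
  ∃ c : Fin n → ℤ, β = ∑ i, (c i : ℝ) • R.α i ∧ ∀ i, 0 ≤ c i

variable {R}

lemma IsPos.simpleCoord_nonneg {β : EuclideanSpace ℝ (Fin d)} (h : R.IsPos β) (p : Fin n) :
    0 ≤ R.simpleCoord p β := by
  obtain ⟨c, rfl, hc⟩ := h
  rw [simpleCoord_sum]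
  exact_mod_cast hc p

lemma IsPos.eq_zero_of_simpleCoord_nonpos {x : EuclideanSpace ℝ (Fin d)} (h : R.IsPos x)
    (h0 : ∀ p, R.simpleCoord p x ≤ 0) : x = 0 := by
  obtain ⟨c, rfl, hc⟩ := h
  refine Finset.sum_eq_zero fun i _ => ?_
  have hi := h0 i
  rw [simpleCoord_sum] at hi
  have : (c i : ℝ) = 0 := le_antisymm hi (by exact_mod_cast hc i)
  rw [this, zero_smul]

variable (R)

lemma isPos_alpha (i : Fin n) : R.IsPos (R.α i) :=
  ⟨Pi.single i 1, by simp [Pi.single_apply], fun j => by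
    by_cases h : j = i <;> simp [h]⟩

lemma isPos_or_isPos_neg {β : EuclideanSpace ℝ (Fin d)} (h : β ∈ R.Φ) :
    R.IsPos β ∨ R.IsPos (-β) := by
  obtain ⟨c, hc, hsign | hsign⟩ := R.base β h
  · exact Or.inl ⟨c, hc, hsign⟩
  · refine Or.inr ⟨-c, ?_, fun i => by simpa using hsign i⟩
    simp [hc, ← Finset.sum_neg_distrib]

lemma not_isPos_neg {β : EuclideanSpace ℝ (Fin d)} (h : β ∈ R.Φ) (hp : R.IsPos β) :
    ¬ R.IsPos (-β) := fun hn =>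
  R.nonzero β h (hp.eq_zero_of_simpleCoord_nonpos fun p => by
    simpa using hn.simpleCoord_nonneg p)

lemma isPos_sRefl {β : EuclideanSpace ℝ (Fin d)} (v : Fin n) (hβ : β ∈ R.Φ)
    (hpos : R.IsPos β) (hne : β ≠ R.α v) : R.IsPos (R.sRefl v β) := by
  refine (R.isPos_or_isPos_neg (R.sRefl_mem v hβ)).resolve_right fun hneg => ?_
  obtain ⟨c, hc, hc0⟩ := hpos
  -- `s_v` only changes the `α_v`-coordinate, so `β` would be a multiple of `α_v`
  have hcz : ∀ p, p ≠ v → c p = 0 := fun p hpv => by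
    have hk := hneg.simpleCoord_nonneg p
    rw [map_neg, sRefl_apply, map_sub, map_smul, simpleCoord_alpha, if_neg hpv, smul_zero,
      sub_zero, hc, simpleCoord_sum] at hk
    exact le_antisymm (by exact_mod_cast neg_nonneg.mp hk) (hc0 p)
  have hβv : β = (c v : ℝ) • R.α v := by
    rw [hc, Finset.sum_eq_single v (fun p _ hp => by simp [hcz p hp]) (by simp)]
  rcases R.reduced _ (R.α_mem v) _ (hβv ▸ hβ) with h1 | h1
  · exact hne (by rw [hβv, h1, one_smul])
  · have : (0 : ℝ) ≤ c v := by exact_mod_cast hc0 v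
    linarith


lemma wordProd_mul_sRefl_of_apply_eq (m : List (Fin n)) {a b : Fin n}
    (h : R.wordProd m (R.α a) = R.α b) :
    R.wordProd m * R.sRefl a = R.sRefl b * R.wordProd m := by
  refine LinearEquiv.ext fun x => ?_
  have hx : corootForm (R.α b) (R.wordProd m x) = corootForm (R.α a) x := by
    rw [corootForm_apply, corootForm_apply, ← h, R.inner_wordProd_wordProd,
      R.inner_wordProd_wordProd]
  change R.wordProd m (R.sRefl a x) = R.sRefl b (R.wordProd m x)
  rw [sRefl_apply, sRefl_apply, map_sub, map_smul, h, hx]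

lemma exists_wordProd_eq_mul_sRefl_of_isPos_neg (m : List (Fin n)) (a : Fin n)
    (hneg : R.IsPos (-R.wordProd m (R.α a))) :
    ∃ m' : List (Fin n), m'.length + 1 = m.length ∧
      R.wordProd m' = R.wordProd m * R.sRefl a := by
  induction m with
  | nil => exact absurd hneg (R.not_isPos_neg (R.α_mem a) (R.isPos_alpha a))
  | cons j m ih =>
    have hmem := R.wordProd_mem m (R.α_mem a)
    rw [wordProd_cons, LinearEquiv.mul_apply] at hneg
    rcases R.isPos_or_isPos_neg hmem with hpos | hneg'
    · have heq : R.wordProd m (R.α a) = R.α j := by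
        by_contra hne
        exact R.not_isPos_neg (R.sRefl_mem j hmem) (R.isPos_sRefl j hmem hpos hne) hneg
      refine ⟨m, by simp, ?_⟩
      rw [wordProd_cons, mul_assoc, R.wordProd_mul_sRefl_of_apply_eq m heq, ← mul_assoc,
        sRefl_mul_self, one_mul]
    · obtain ⟨m', hlen, hm'⟩ := ih hneg'
      exact ⟨j :: m', by simp [← hlen], by rw [wordProd_cons, wordProd_cons, hm', mul_assoc]⟩

lemma len_le {w : EuclideanSpace ℝ (Fin d) ≃ₗ[ℝ] EuclideanSpace ℝ (Fin d)}
    (m : List (Fin n)) (h : R.wordProd m = w) : R.len w ≤ m.length :=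
  Nat.sInf_le ⟨m, rfl, h⟩

lemma exists_wordProd_eq_of_length_eq_len
    {w : EuclideanSpace ℝ (Fin d) ≃ₗ[ℝ] EuclideanSpace ℝ (Fin d)}
    (m : List (Fin n)) (h : R.wordProd m = w) :
    ∃ m' : List (Fin n), m'.length = R.len w ∧ R.wordProd m' = w :=
  Nat.sInf_mem (s := {t | ∃ l : List (Fin n), l.length = t ∧ R.wordProd l = w})
    ⟨m.length, m, rfl, h⟩

lemma isPos_apply_alpha_of_len_lt {w : EuclideanSpace ℝ (Fin d) ≃ₗ[ℝ] EuclideanSpace ℝ (Fin d)}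
    (m : List (Fin n)) (hw : R.wordProd m = w) (j : Fin n)
    (h : R.len w < R.len (w * R.sRefl j)) : R.IsPos (w (R.α j)) := by
  refine (R.isPos_or_isPos_neg (hw ▸ R.wordProd_mem m (R.α_mem j))).resolve_right fun hneg => ?_
  obtain ⟨m₀, hm₀len, hm₀⟩ := R.exists_wordProd_eq_of_length_eq_len m hw
  obtain ⟨m', hlen, hm'⟩ := R.exists_wordProd_eq_mul_sRefl_of_isPos_neg m₀ j (hm₀ ▸ hneg)
  have := R.len_le m' (hm₀ ▸ hm')
  omega

lemma seqProd_append_cons (l₁ l₂ : List (Fin n)) (v : Fin n) :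
    R.seqProd (l₁ ++ v :: l₂) = R.seqProd l₂ * R.sRefl v * R.seqProd l₁ := by
  rw [← List.singleton_append, seqProd_append, seqProd_append]
  simp [seqProd]

variable {R}

lemma isPos_wordProd_of_reduced {l₁ l₂ : List (Fin n)} {v : Fin n}
    (hred : R.len (R.seqProd (l₁ ++ v :: l₂)) = (l₁ ++ v :: l₂).length) :
    R.IsPos (R.wordProd l₁ (R.α v)) := by
  refine (R.isPos_or_isPos_neg (R.wordProd_mem l₁ (R.α_mem v))).resolve_right fun hneg => ?_
  obtain ⟨m', hlen, hm'⟩ := R.exists_wordProd_eq_mul_sRefl_of_isPos_neg l₁ v hneg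
  have hshort : R.seqProd (l₁ ++ v :: l₂) = R.seqProd (m' ++ l₂) := by
    rw [seqProd_append_cons, seqProd_append, mul_assoc, R.seqProd_eq_inv l₁, R.seqProd_eq_inv m',
      hm', mul_inv_rev, sRefl_inv]
  have := R.len_le (m' ++ l₂).reverse hshort.symm
  simp only [List.length_reverse, List.length_append, List.length_cons] at this hred
  omega

lemma isPos_seqProd_of_reduced {l₁ l₂ : List (Fin n)} {v : Fin n}
    (hred : R.len (R.seqProd (l₁ ++ v :: l₂)) = (l₁ ++ v :: l₂).length) :
    R.IsPos (R.seqProd l₂ (R.α v)) := by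
  refine (R.isPos_or_isPos_neg (R.seqProd_mem l₂ (R.α_mem v))).resolve_right fun hneg => ?_
  obtain ⟨m', hlen, hm'⟩ := R.exists_wordProd_eq_mul_sRefl_of_isPos_neg l₂.reverse v hneg
  have hshort : R.seqProd (l₁ ++ v :: l₂) = R.wordProd (m' ++ l₁.reverse) := by
    rw [seqProd_append_cons, wordProd_append, hm']
    rfl
  have := R.len_le _ hshort.symm
  simp only [List.length_reverse, List.length_append, List.length_cons] at this hred hlen
  omega


variable (R)

def confVec (c : Fin n → ℤ) : EuclideanSpace ℝ (Fin d) := ∑ u, (c u : ℝ) • R.α u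

lemma corootForm_confVec (c : Fin n → ℤ) (v : Fin n) :
    corootForm (R.α v) (R.confVec c) = ((∑ u, R.cartan u v * c u : ℤ) : ℝ) := by
  simp [confVec, R.cartan_eq_corootForm, mul_comm]

lemma confVec_update (c : Fin n → ℤ) (v : Fin n) (x : ℤ) :
    R.confVec (Function.update c v x) = R.confVec c + ((x - c v : ℤ) : ℝ) • R.α v := by
  simp only [confVec, ← Finset.add_sum_erase _ _ (Finset.mem_univ v), Function.update_self]
  rw [Finset.sum_congr rfl fun u hu => by rw [Function.update_of_ne (Finset.ne_of_mem_erase hu)]]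
  push_cast
  module

lemma chipBound_sub_two_mul (I : Finset (Fin n)) (c : Fin n → ℤ) (v : Fin n) :
    R.chipBound I c v - 2 * c v = (if v ∈ I then 1 else 0) - ∑ u, R.cartan u v * c u := by
  rw [chipBound, ← Finset.add_sum_erase _ _ (Finset.mem_univ v), R.cartan_self]
  simp only [neg_mul, Finset.sum_neg_distrib]
  ring

lemma sad_iff (I : Finset (Fin n)) (c : Fin n → ℤ) (v : Fin n) :
    R.Sad I c v ↔ corootForm (R.α v) (R.confVec c) < if v ∈ I then 1 else 0 := by
  have h := R.chipBound_sub_two_mul I c v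
  rw [Sad, corootForm_confVec]
  split_ifs at h ⊢ <;> norm_cast <;> omega

lemma confVec_fire (I : Finset (Fin n)) (c : Fin n → ℤ) (v : Fin n) :
    R.confVec (R.fire I c v)
      = R.sRefl v (R.confVec c) + (if v ∈ I then (1 : ℝ) else 0) • R.α v := by
  have h : R.chipBound I c v - c v - c v
      = (if v ∈ I then 1 else 0) - ∑ u, R.cartan u v * c u := by
    rw [← R.chipBound_sub_two_mul]
    ring
  rw [fire, confVec_update, sRefl_apply, corootForm_confVec, h]
  split_ifs <;> push_cast <;> module

lemma play_concat (I : Finset (Fin n)) (l : List (Fin n)) (v : Fin n) :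
    R.play I (l ++ [v]) = R.fire I (R.play I l) v := by
  simp [play]


def KForm (I : Finset (Fin n)) : EuclideanSpace ℝ (Fin d) →ₗ[ℝ] ℝ :=
  ∑ p ∈ I, (⟪R.α p, R.α p⟫ / 2) • R.simpleCoord p

lemma KForm_apply (I : Finset (Fin n)) (x : EuclideanSpace ℝ (Fin d)) :
    R.KForm I x = ∑ p ∈ I, ⟪R.α p, R.α p⟫ / 2 * R.simpleCoord p x := by
  simp [KForm]

lemma KForm_alpha (I : Finset (Fin n)) (v : Fin n) :
    R.KForm I (R.α v) = if v ∈ I then ⟪R.α v, R.α v⟫ / 2 else 0 := by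
  simp [KForm_apply, simpleCoord_alpha]

lemma KForm_sRefl (I : Finset (Fin n)) (v : Fin n) (x : EuclideanSpace ℝ (Fin d)) :
    R.KForm I (R.sRefl v x) = R.KForm I x - (if v ∈ I then 1 else 0) * ⟪x, R.α v⟫ := by
  have h := R.inner_alpha_ne_zero v
  rw [sRefl_apply, map_sub, map_smul, KForm_alpha, corootForm_apply, smul_eq_mul]
  split_ifs
  · field_simp
  · simp

lemma KForm_pos {I : Finset (Fin n)} {γ : EuclideanSpace ℝ (Fin d)} (hγ : R.IsPos γ)
    {p : Fin n} (hp : p ∈ I) (hγp : R.simpleCoord p γ ≠ 0) : 0 < R.KForm I γ := by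
  rw [KForm_apply]
  refine Finset.sum_pos' (fun q _ => ?_) ⟨p, hp, ?_⟩
  · have := R.inner_alpha_pos q
    have := hγ.simpleCoord_nonneg q
    positivity
  · have := R.inner_alpha_pos p
    have := (hγ.simpleCoord_nonneg p).lt_of_ne' hγp
    positivity

lemma inner_confVec_play_sub_KForm (I : Finset (Fin n)) (l : List (Fin n))
    (δ : EuclideanSpace ℝ (Fin d)) :
    ⟪R.confVec (R.play I l), R.seqProd l δ⟫ - R.KForm I (R.seqProd l δ) = -R.KForm I δ := by
  induction l using List.reverseRecOn with
  | nil => simp [play, confVec, seqProd]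
  | append_singleton l v ih =>
    rw [play_concat, confVec_fire, seqProd_concat, LinearEquiv.mul_apply, inner_add_left,
      real_inner_smul_left, inner_sRefl_sRefl, inner_alpha_sRefl, KForm_sRefl]
    linarith

lemma sad_play_iff (I : Finset (Fin n)) (l : List (Fin n)) (v : Fin n) :
    R.Sad I (R.play I l) v ↔ 0 < R.KForm I (R.wordProd l (R.α v)) := by
  have h := R.inner_confVec_play_sub_KForm I l (R.wordProd l (R.α v))
  have hv := R.inner_alpha_pos v
  rw [seqProd_wordProd_apply, KForm_alpha] at h
  rw [sad_iff, corootForm_apply, div_lt_iff₀ hv]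
  split_ifs at h ⊢ <;> constructor <;> intro <;> linarith

lemma validFrom_play_of_sad (I : Finset (Fin n)) (l₁ l₂ : List (Fin n))
    (h : ∀ m v m', m ++ v :: m' = l₁ ++ l₂ → R.Sad I (R.play I m) v) :
    R.ValidFrom I (R.play I l₁) l₂ := by
  induction l₂ generalizing l₁ with
  | nil => trivial
  | cons v l₂ ih =>
    refine ⟨h l₁ v l₂ rfl, ?_⟩
    rw [← play_concat]
    exact ih _ fun m v' m' hm => h m v' m' (by simp [hm])

variable {R}

lemma simpleCoord_seqProd_nonneg_of_mem_minReps {I : Finset (Fin n)} {l : List (Fin n)}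
    (hmin : R.seqProd l ∈ R.minReps I) {γ : EuclideanSpace ℝ (Fin d)} (hγ : R.IsPos γ)
    (hγI : ∀ p ∈ I, R.simpleCoord p γ = 0) (q : Fin n) :
    0 ≤ R.simpleCoord q (R.seqProd l γ) := by
  obtain ⟨c, rfl, hc⟩ := hγ
  simp only [map_sum, map_smul, smul_eq_mul]
  refine Finset.sum_nonneg fun i _ => ?_
  by_cases hi : i ∈ I
  · have := hγI i hi
    rw [simpleCoord_sum] at this
    simp [this]
  · exact mul_nonneg (by exact_mod_cast hc i) <|
      (R.isPos_apply_alpha_of_len_lt l.reverse rfl i (hmin.2 i hi)).simpleCoord_nonneg q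

lemma exists_simpleCoord_ne_zero_of_reduced_of_mem_minReps {I : Finset (Fin n)}
    {l₁ l₂ : List (Fin n)} {v : Fin n}
    (hred : R.len (R.seqProd (l₁ ++ v :: l₂)) = (l₁ ++ v :: l₂).length)
    (hmin : R.seqProd (l₁ ++ v :: l₂) ∈ R.minReps I) :
    ∃ p ∈ I, R.simpleCoord p (R.wordProd l₁ (R.α v)) ≠ 0 := by
  by_contra! hI
  have happly : R.seqProd (l₁ ++ v :: l₂) (R.wordProd l₁ (R.α v)) = -R.seqProd l₂ (R.α v) := by
    rw [seqProd_append_cons, LinearEquiv.mul_apply, LinearEquiv.mul_apply,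
      seqProd_wordProd_apply, sRefl_alpha_self, map_neg]
  have hzero := (isPos_seqProd_of_reduced hred).eq_zero_of_simpleCoord_nonpos fun q => by
    simpa [happly] using
      simpleCoord_seqProd_nonneg_of_mem_minReps hmin (isPos_wordProd_of_reduced hred) hI q
  exact R.nonzero _ (R.seqProd_mem l₂ (R.α_mem v)) hzero

lemma sad_play_of_reduced_of_mem_minReps {I : Finset (Fin n)} {l₁ l₂ : List (Fin n)} {v : Fin n}
    (hred : R.len (R.seqProd (l₁ ++ v :: l₂)) = (l₁ ++ v :: l₂).length)
    (hmin : R.seqProd (l₁ ++ v :: l₂) ∈ R.minReps I) :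
    R.Sad I (R.play I l₁) v := by
  obtain ⟨p, hp, hγp⟩ := exists_simpleCoord_ne_zero_of_reduced_of_mem_minReps hred hmin
  exact (R.sad_play_iff I l₁ v).2 (R.KForm_pos (isPos_wordProd_of_reduced hred) hp hγp)

end RootSystemBase

/-- If `w ∈ W^J` (for `J = S \\ {s_i : i ∈ I}`) has reduced expression
`s_{i_t} ⋯ s_{i_1}`, then `(i_1, …, i_t)` is a valid firing sequence of the Modified Kostant
Game with active set `I`: at each step the fired vertex is sad. -/
theorem statement1 {n d : ℕ} (R : RootSystemBase n d) (I : Finset (Fin n))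
    (l : List (Fin n))
    (hred : R.len (R.seqProd l) = l.length)
    (hmin : R.seqProd l ∈ R.minReps I) :
    R.Valid I l :=
  R.validFrom_play_of_sad I [] l fun l₁ v l₂ h => by
    subst h
    exact RootSystemBase.sad_play_of_reduced_of_mem_minReps hred hmin
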